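/- Let Γ be a strictly Deza graph with parameters (n, k, b, a) with k = b + 1 and β(v) > 1 for every vertex v. (1) If x is a vertex of type (A1), then for every vertex v ∈ N(x) \ {x*}, B[v] ⊆ N(x) \ {x*}. (2) If x is a vertex of type (A2), then for every vertex v ∈ N(x) \ B(x*), B[v] ⊆ N(x) \ B(x*). -/

import Mathlib

open Finset SimpleGraph

universe u v

/-- The number of common neighbours of two vertices. -/
def commonNbrs {V : Type u} [Fintype V] [DecidableEq V] (G : SimpleGraph V)
    [DecidableRel G.Adj] (x y : V) : ℕ :=
  (G.neighborFinset x ∩ G.neighborFinset y).card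

/-- `G` is a Deza graph with parameters `(n, k, b, a)`: a nonempty `k`-regular graph on `n`
vertices in which any two distinct vertices have either `b` or `a` common neighbours,
where `b ≥ a`. -/
def IsDezaGraph {V : Type u} [Fintype V] [DecidableEq V] (G : SimpleGraph V)
    [DecidableRel G.Adj] (n k b a : ℕ) : Prop :=
  G ≠ ⊥ ∧ Fintype.card V = n ∧ G.IsRegularOfDegree k ∧ a ≤ b ∧
    ∀ x y : V, x ≠ y → commonNbrs G x y = b ∨ commonNbrs G x y = a

/-- `G` is a strictly Deza graph with parameters `(n, k, b, a)`: a Deza graph of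
diameter 2 that is not strongly regular. -/
def IsStrictlyDezaGraph {V : Type u} [Fintype V] [DecidableEq V] (G : SimpleGraph V)
    [DecidableRel G.Adj] (n k b a : ℕ) : Prop :=
  IsDezaGraph G n k b a ∧ G.Connected ∧ (∀ x y : V, G.dist x y ≤ 2) ∧
    (∃ x y : V, G.dist x y = 2) ∧ ¬ ∃ ℓ μ : ℕ, G.IsSRGWith n k ℓ μ

/-- `B(v)`: the set of vertices `u ≠ v` having exactly `b` common neighbours with `v`. -/
def dezaB {V : Type u} [Fintype V] [DecidableEq V] (G : SimpleGraph V)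
    [DecidableRel G.Adj] (b : ℕ) (v : V) : Finset V :=
  univ.filter fun u => u ≠ v ∧ commonNbrs G u v = b

/-- `A(v)`: the set of vertices `u ≠ v` having exactly `a` common neighbours with `v`. -/
def dezaA {V : Type u} [Fintype V] [DecidableEq V] (G : SimpleGraph V)
    [DecidableRel G.Adj] (a : ℕ) (v : V) : Finset V :=
  univ.filter fun u => u ≠ v ∧ commonNbrs G u v = a

/-- `B[v] = B(v) ∪ {v}`. -/
def dezaBc {V : Type u} [Fintype V] [DecidableEq V] (G : SimpleGraph V)
    [DecidableRel G.Adj] (b : ℕ) (v : V) : Finset V :=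
  insert v (dezaB G b v)

/-- A vertex `v` is of type (A) if `B(v) ∩ N(v) = ∅`. -/
def IsTypeA {V : Type u} [Fintype V] [DecidableEq V] (G : SimpleGraph V)
    [DecidableRel G.Adj] (b : ℕ) (v : V) : Prop :=
  dezaB G b v ∩ G.neighborFinset v = ∅

/-- A vertex `v` is of type (B) if `B(v) ⊆ N(v)`. -/
def IsTypeB {V : Type u} [Fintype V] [DecidableEq V] (G : SimpleGraph V)
    [DecidableRel G.Adj] (b : ℕ) (v : V) : Prop :=
  dezaB G b v ⊆ G.neighborFinset v

/-- A vertex `v` is of type (C) if `|B(v) ∩ N(v)| = 1`. -/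
def IsTypeC {V : Type u} [Fintype V] [DecidableEq V] (G : SimpleGraph V)
    [DecidableRel G.Adj] (b : ℕ) (v : V) : Prop :=
  (dezaB G b v ∩ G.neighborFinset v).card = 1

/-- A vertex `x` of type (A) is of type (A1) if there exists `y ∈ N(x)` with
`N(x) \ N(xᵢ) = {y}` for every `xᵢ ∈ B(x)`. -/
def IsTypeA1 {V : Type u} [Fintype V] [DecidableEq V] (G : SimpleGraph V)
    [DecidableRel G.Adj] (b : ℕ) (x : V) : Prop :=
  IsTypeA G b x ∧ ∃ y ∈ G.neighborFinset x,
    ∀ xi ∈ dezaB G b x, G.neighborFinset x \ G.neighborFinset xi = {y}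

/-- A vertex `x` of type (A) is of type (A2) if there exists `z ∉ N[x]` with
`N(xᵢ) \ N(x) = {z}` for every `xᵢ ∈ B(x)`. -/
def IsTypeA2 {V : Type u} [Fintype V] [DecidableEq V] (G : SimpleGraph V)
    [DecidableRel G.Adj] (b : ℕ) (x : V) : Prop :=
  IsTypeA G b x ∧ ∃ z ∉ insert x (G.neighborFinset x),
    ∀ xi ∈ dezaB G b x, G.neighborFinset xi \ G.neighborFinset x = {z}

/-- The complete multipartite graph with `m` parts of size `t`. -/
def completeMultipartiteGr (m t : ℕ) : SimpleGraph (Fin m × Fin t) where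
  Adj u v := u.1 ≠ v.1
  symm := ⟨fun _ _ h => Ne.symm h⟩
  loopless := ⟨fun _ h => h rfl⟩

/-- The 2-clique extension of a graph `H`: vertices `(u, i)` and `(v, j)` are adjacent
iff `u ~ v` in `H`, or `u = v` and `i ≠ j`. -/
def cliqueExt2 {W : Type v} (H : SimpleGraph W) : SimpleGraph (W × Fin 2) where
  Adj u v := H.Adj u.1 v.1 ∨ (u.1 = v.1 ∧ u.2 ≠ v.2)
  symm := by
    constructor
    intro u v h
    rcases h with h | ⟨h1, h2⟩
    · exact Or.inl h.symm
    · exact Or.inr ⟨h1.symm, h2.symm⟩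
  loopless := by
    constructor
    intro u h
    rcases h with h | ⟨_, h2⟩
    · exact H.loopless.irrefl _ h
    · exact h2 rfl

/-!
Since `k = b + 1`, two vertices `u, v` with `b` common neighbours differ in exactly one
neighbour each: all neighbours of `u` but one are adjacent to `v`. Both parts come from locating
this one missing neighbour.

(A1) The members of `B(x)` contain `N(x) \ {x*}`, and two of them have nothing else in common.
For `w ∈ N(x) \ {x*}` and `u ∈ B(w)`, if `u ∉ N(x)` then `x` is the neighbour of `w` missing
from `N(u)`, so two members of `B(x)` are adjacent to `u`, forcing `u ∈ N(x)`; and `u = x*` fails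
because two members of `B(x)` would be neighbours of `w` missing from `N(x*)`.

(A2) With `z = x*`, each `xᵢ ∈ B(x)` has `N(xᵢ) = N(x) \ {yᵢ} ∪ {z}` with `yᵢ ∉ N(z)`, the `yᵢ`
distinct.
If `u ∉ N(x)`, then again `x` is the neighbour of `w` missing from `N(u)`, so an `xᵢ` with
`yᵢ ≠ w` is adjacent to `u`, forcing `u = z` and `w ∈ B(z)`. If `u ∈ B(z)`, then `x` is the
neighbour of `u` missing from `N(z)`; counting gives `a = b - 1` and `N(z) ∩ N(w) ⊆ N(u)`.
Now `N(x) \ N(z)` has `k - a = 2` elements, so it consists of two of the `yᵢ`, one of them `u`,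
and the corresponding `xᵢ` lies in `N(z) ∩ N(w)` but not in `N(u)`.
-/

namespace Finset

variable {α : Type*} [DecidableEq α] {s t : Finset α} {y z v : α}

theorem mem_of_sdiff_eq_singleton (h : s \ t = {y}) (hv : v ∈ s) (hvy : v ≠ y) : v ∈ t := by
  by_contra hvt
  exact hvy (mem_singleton.mp (h ▸ mem_sdiff.mpr ⟨hv, hvt⟩))

theorem mem_and_notMem_of_sdiff_eq_singleton (h : s \ t = {y}) : y ∈ s ∧ y ∉ t :=
  mem_sdiff.mp (h ▸ mem_singleton_self y)

theorem eq_insert_erase_of_sdiff_eq_singleton (hts : t \ s = {z}) (hst : s \ t = {y}) :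
    t = insert z (s.erase y) := by
  ext v
  have hz := Finset.ext_iff.mp hts v
  have hy := Finset.ext_iff.mp hst v
  simp only [mem_sdiff, mem_singleton] at hz hy
  simp only [mem_insert, mem_erase]
  grind

end Finset

section Deza

variable {V : Type u} [Fintype V] [DecidableEq V] {G : SimpleGraph V} [DecidableRel G.Adj]
  {n k b a : ℕ} {u v w x y z : V}

theorem commonNbrs_comm (u v : V) : commonNbrs G u v = commonNbrs G v u := by
  rw [commonNbrs, commonNbrs, inter_comm]

theorem mem_dezaB : u ∈ dezaB G b v ↔ u ≠ v ∧ commonNbrs G u v = b := by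
  simp [dezaB]

theorem mem_dezaB_comm : u ∈ dezaB G b v ↔ v ∈ dezaB G b u := by
  rw [mem_dezaB, mem_dezaB, commonNbrs_comm, ne_comm]

theorem card_neighborFinset_sdiff_eq_one (hreg : G.IsRegularOfDegree (b + 1))
    (hc : commonNbrs G u v = b) : #(G.neighborFinset u \ G.neighborFinset v) = 1 := by
  have := card_inter_add_card_sdiff (G.neighborFinset u) (G.neighborFinset v)
  rw [card_neighborFinset_eq_degree, hreg u] at this
  rw [commonNbrs] at hc
  omega

theorem adj_of_commonNbrs_eq (hreg : G.IsRegularOfDegree (b + 1)) (hc : commonNbrs G u v = b)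
    {s t : V} (hs : G.Adj u s) (hvs : ¬G.Adj v s) (ht : G.Adj u t) (hts : t ≠ s) : G.Adj v t := by
  by_contra hvt
  refine hts (card_le_one.mp (card_neighborFinset_sdiff_eq_one hreg hc).le t ?_ s ?_) <;>
    simpa [mem_sdiff] using ⟨‹_›, ‹_›⟩

theorem adj_iff_of_neighborFinset_eq_insert_erase {x' : V}
    (h : G.neighborFinset x' = insert z ((G.neighborFinset x).erase y)) {t : V} :
    G.Adj x' t ↔ t = z ∨ t ≠ y ∧ G.Adj x t := by
  rw [← mem_neighborFinset, h]
  simp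

theorem commonNbrs_add_one_eq_and_inter_subset (hreg : G.IsRegularOfDegree (b + 1))
    (hcuz : commonNbrs G u z = b) (hcuw : commonNbrs G u w = b) (hzw : commonNbrs G z w < b)
    (hux : G.Adj u x) (hwx : G.Adj w x) (hzx : ¬G.Adj z x) :
    commonNbrs G z w + 1 = b ∧ G.neighborFinset z ∩ G.neighborFinset w ⊆ G.neighborFinset u := by
  -- `x` is the only neighbour of `u` outside `N(z)`
  have hsub : (G.neighborFinset u ∩ G.neighborFinset w).erase x ⊆
      G.neighborFinset z ∩ G.neighborFinset w := by
    intro t ht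
    simp only [mem_erase, mem_inter, mem_neighborFinset] at ht ⊢
    exact ⟨adj_of_commonNbrs_eq hreg hcuz hux hzx ht.2.1 ht.1, ht.2.2⟩
  have hcard : #((G.neighborFinset u ∩ G.neighborFinset w).erase x) = b - 1 := by
    rw [card_erase_of_mem (by simpa using ⟨hux, hwx⟩), ← commonNbrs, hcuw]
  have hle := card_le_card hsub
  rw [hcard, ← commonNbrs] at hle
  refine ⟨by omega, ?_⟩
  rw [← eq_of_subset_of_card_le hsub (by rw [hcard, ← commonNbrs]; omega)]
  exact (erase_subset _ _).trans inter_subset_left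

/-- For `x` of type (A2) with `x* = z`, these are the neighbours of `x` missed by the members
of `B(x)`. -/
def swapNbrs (G : SimpleGraph V) [DecidableRel G.Adj] (x z : V) : Finset V :=
  (G.neighborFinset x).filter fun y =>
    ∃ x', G.neighborFinset x' = insert z ((G.neighborFinset x).erase y)

namespace IsDezaGraph

theorem isRegularOfDegree (hG : IsDezaGraph G n k b a) : G.IsRegularOfDegree k :=
  hG.2.2.1

theorem commonNbrs_le (hG : IsDezaGraph G n k b a) (huv : u ≠ v) :
    commonNbrs G u v ≤ b := by
  rcases hG.2.2.2.2 u v huv with h | h <;> linarith [hG.2.2.2.1]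

theorem le_commonNbrs (hG : IsDezaGraph G n k b a) (huv : u ≠ v) :
    a ≤ commonNbrs G u v := by
  rcases hG.2.2.2.2 u v huv with h | h <;> linarith [hG.2.2.2.1]

theorem commonNbrs_eq_of_notMem_dezaB (hG : IsDezaGraph G n k b a) (huv : u ≠ v)
    (hu : u ∉ dezaB G b v) : commonNbrs G u v = a :=
  (hG.2.2.2.2 u v huv).resolve_left fun h => hu (mem_dezaB.mpr ⟨huv, h⟩)

theorem neighborFinset_injective (hG : IsDezaGraph G n (b + 1) b a) :
    Function.Injective fun v => G.neighborFinset v := by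
  intro u v huv
  by_contra hne
  have := hG.commonNbrs_le hne
  rw [commonNbrs, show G.neighborFinset u = G.neighborFinset v from huv, inter_self,
    card_neighborFinset_eq_degree, hG.isRegularOfDegree v] at this
  omega

theorem dezaBc_subset_of_typeA1 (hG : IsDezaGraph G n (b + 1) b a) (hβ : 1 < #(dezaB G b x))
    (hy : ∀ xi ∈ dezaB G b x, G.neighborFinset x \ G.neighborFinset xi = {y})
    (hw : w ∈ G.neighborFinset x \ {y}) :
    dezaBc G b w ⊆ G.neighborFinset x \ {y} := by
  intro u hu
  rcases mem_insert.mp hu with rfl | hu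
  · exact hw
  obtain ⟨hxw, hwy⟩ : G.Adj x w ∧ w ≠ y := by simpa using hw
  have hcwu : commonNbrs G w u = b := (mem_dezaB.mp (mem_dezaB_comm.mp hu)).2
  obtain ⟨xi, hxi, xj, hxj, hij⟩ := one_lt_card.mp hβ
  have hadj : ∀ x' ∈ dezaB G b x, ∀ t, G.Adj x t → t ≠ y → G.Adj x' t := fun x' hx' t hxt hty =>
    by simpa using mem_of_sdiff_eq_singleton (hy x' hx') (by simpa using hxt) hty
  have hnadj : ∀ x' ∈ dezaB G b x, ¬G.Adj x' y := fun x' hx' =>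
    by simpa using (mem_and_notMem_of_sdiff_eq_singleton (hy x' hx')).2
  -- `N(x) \ {y}` already has `b` elements, so it is all of `N(xi) ∩ N(xj)`
  have hcommon : G.neighborFinset x \ {y} = G.neighborFinset xi ∩ G.neighborFinset xj := by
    refine eq_of_subset_of_card_le (fun t ht => ?_) ?_
    · obtain ⟨hxt, hty⟩ : G.Adj x t ∧ t ≠ y := by simpa using ht
      simpa using ⟨hadj xi hxi t hxt hty, hadj xj hxj t hxt hty⟩
    · rw [card_sdiff_of_subset (singleton_subset_iff.mpr
        (mem_and_notMem_of_sdiff_eq_singleton (hy xi hxi)).1), card_singleton,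
        card_neighborFinset_eq_degree, hG.isRegularOfDegree x]
      exact hG.commonNbrs_le hij
  have hwxi : G.Adj w xi := (hadj xi hxi w hxw hwy).symm
  have hwxj : G.Adj w xj := (hadj xj hxj w hxw hwy).symm
  have hxu : G.Adj x u := by
    by_contra hxu
    -- `x` is the only neighbour of `w` outside `N(u)`
    have hu_adj : ∀ t, G.Adj w t → t ≠ x → G.Adj t u := fun t hwt htx =>
      (adj_of_commonNbrs_eq hG.isRegularOfDegree hcwu hxw.symm (fun h => hxu h.symm) hwt htx).symm
    have hu_common : u ∈ G.neighborFinset xi ∩ G.neighborFinset xj := by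
      simpa using ⟨hu_adj xi hwxi (mem_dezaB.mp hxi).1, hu_adj xj hwxj (mem_dezaB.mp hxj).1⟩
    rw [← hcommon] at hu_common
    exact hxu (by simpa using (mem_sdiff.mp hu_common).1)
  have huy : u ≠ y := by
    rintro rfl
    exact hnadj xj hxj (adj_of_commonNbrs_eq hG.isRegularOfDegree hcwu hwxi
      (fun h => hnadj xi hxi h.symm) hwxj hij.symm).symm
  simpa using ⟨hxu, huy⟩

theorem swapNbrs_subset (hG : IsDezaGraph G n (b + 1) b a) (hczx : commonNbrs G z x = a) :
    swapNbrs G x z ⊆ G.neighborFinset x \ G.neighborFinset z := by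
  intro y hy
  obtain ⟨hxy, x', hN⟩ := mem_filter.mp hy
  refine mem_sdiff.mpr ⟨hxy, fun hzy => ?_⟩
  -- otherwise `x'` would have only `a - 1` common neighbours with `z`
  have hinter : G.neighborFinset x' ∩ G.neighborFinset z =
      (G.neighborFinset x ∩ G.neighborFinset z).erase y := by
    rw [hN]
    ext t
    simp only [mem_inter, mem_insert, mem_erase, mem_neighborFinset]
    constructor
    · rintro ⟨rfl | ⟨hty, hxt⟩, hzt⟩
      exacts [absurd hzt (G.loopless.irrefl t), ⟨hty, hxt, hzt⟩]
    · rintro ⟨hty, hxt, hzt⟩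
      exact ⟨Or.inr ⟨hty, hxt⟩, hzt⟩
  have hlt := card_erase_lt_of_mem (mem_inter.mpr ⟨hxy, hzy⟩)
  have hx'z : x' ≠ z := by
    rintro rfl
    exact G.notMem_neighborFinset_self x' (hN ▸ mem_insert_self x' _)
  have := hG.le_commonNbrs hx'z
  rw [commonNbrs, hinter] at this
  rw [commonNbrs_comm, commonNbrs] at hczx
  omega

theorem one_lt_card_swapNbrs (hG : IsDezaGraph G n (b + 1) b a) (hβ : 1 < #(dezaB G b x))
    (hz : ∀ xi ∈ dezaB G b x, G.neighborFinset xi \ G.neighborFinset x = {z}) :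
    1 < #(swapNbrs G x z) := by
  have hswap : ∀ xi ∈ dezaB G b x, ∃ y ∈ swapNbrs G x z,
      G.neighborFinset xi = insert z ((G.neighborFinset x).erase y) := by
    intro xi hxi
    have hcx : commonNbrs G x xi = b := (mem_dezaB.mp (mem_dezaB_comm.mp hxi)).2
    obtain ⟨y, hy⟩ := card_eq_one.mp (card_neighborFinset_sdiff_eq_one hG.isRegularOfDegree hcx)
    have hN := eq_insert_erase_of_sdiff_eq_singleton (hz xi hxi) hy
    exact ⟨y, mem_filter.mpr ⟨(mem_and_notMem_of_sdiff_eq_singleton hy).1, xi, hN⟩, hN⟩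
  obtain ⟨xi, hxi, xj, hxj, hij⟩ := one_lt_card.mp hβ
  obtain ⟨yi, hyi, hNi⟩ := hswap xi hxi
  obtain ⟨yj, hyj, hNj⟩ := hswap xj hxj
  refine one_lt_card.mpr ⟨yi, hyi, yj, hyj, ?_⟩
  rintro rfl
  exact hij (hG.neighborFinset_injective (hNi.trans hNj.symm))

theorem adj_of_mem_dezaB_of_one_lt_card_swapNbrs (hreg : G.IsRegularOfDegree (b + 1))
    (hS : 1 < #(swapNbrs G x z)) (hxz : ¬G.Adj x z) (hxw : G.Adj x w) (hwB : w ∉ dezaB G b z)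
    (hu : u ∈ dezaB G b w) : G.Adj x u := by
  by_contra hxu
  have hcwu : commonNbrs G w u = b := (mem_dezaB.mp (mem_dezaB_comm.mp hu)).2
  obtain ⟨y, hy, hyw⟩ := exists_mem_ne hS w
  obtain ⟨-, x', hN⟩ := mem_filter.mp hy
  have hx'x : x' ≠ x := by
    rintro rfl
    exact hxz ((adj_iff_of_neighborFinset_eq_insert_erase hN).mpr (Or.inl rfl))
  have hx'w := (adj_iff_of_neighborFinset_eq_insert_erase hN).mpr (Or.inr ⟨hyw.symm, hxw⟩)
  -- `x` is the only neighbour of `w` outside `N(u)`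
  have hux' := adj_of_commonNbrs_eq hreg hcwu hxw.symm (fun h => hxu h.symm) hx'w.symm hx'x
  rcases (adj_iff_of_neighborFinset_eq_insert_erase hN).mp hux'.symm with rfl | ⟨-, h⟩
  · exact hwB (mem_dezaB_comm.mp hu)
  · exact hxu h

theorem notMem_dezaB_of_one_lt_card_swapNbrs (hG : IsDezaGraph G n (b + 1) b a)
    (hS : 1 < #(swapNbrs G x z)) (hczx : commonNbrs G z x = a) (hxz : ¬G.Adj x z) (hzx : z ≠ x)
    (hxw : G.Adj x w) (hxu : G.Adj x u) (hu : u ∈ dezaB G b w) (hczw : commonNbrs G z w = a)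
    (hab : a < b) : u ∉ dezaB G b z := by
  intro huB
  obtain ⟨huw, hcuw⟩ := mem_dezaB.mp hu
  have hcuz : commonNbrs G u z = b := (mem_dezaB.mp huB).2
  have hzu : ¬G.Adj z u := fun h => G.loopless.irrefl z
    (adj_of_commonNbrs_eq hG.isRegularOfDegree hcuz hxu.symm (fun h' => hxz h'.symm) h.symm hzx)
  obtain ⟨hba, hsub⟩ := commonNbrs_add_one_eq_and_inter_subset hG.isRegularOfDegree hcuz hcuw
    (hczw ▸ hab) hxu.symm hxw.symm (fun h => hxz h.symm)
  -- `N(x) \ N(z)` has `k - a = 2` elements, so it is all of `swapNbrs G x z`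
  have hswap : swapNbrs G x z = G.neighborFinset x \ G.neighborFinset z := by
    refine eq_of_subset_of_card_le (hG.swapNbrs_subset hczx) ?_
    have hsplit := card_inter_add_card_sdiff (G.neighborFinset x) (G.neighborFinset z)
    rw [card_neighborFinset_eq_degree, hG.isRegularOfDegree x, ← commonNbrs, commonNbrs_comm,
      hczx] at hsplit
    omega
  have hu : u ∈ swapNbrs G x z := by
    rw [hswap]
    simpa using ⟨hxu, hzu⟩
  obtain ⟨-, x', hN⟩ := mem_filter.mp hu
  have hx' : x' ∈ G.neighborFinset z ∩ G.neighborFinset w := by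
    simp only [mem_inter, mem_neighborFinset]
    exact ⟨((adj_iff_of_neighborFinset_eq_insert_erase hN).mpr (Or.inl rfl)).symm,
      ((adj_iff_of_neighborFinset_eq_insert_erase hN).mpr (Or.inr ⟨huw.symm, hxw⟩)).symm⟩
  have hux' : G.Adj u x' := by simpa using hsub hx'
  rcases (adj_iff_of_neighborFinset_eq_insert_erase hN).mp hux'.symm with rfl | ⟨h, -⟩
  · exact hxz hxu
  · exact h rfl

theorem dezaBc_subset_of_typeA2 (hG : IsDezaGraph G n (b + 1) b a) (hβ : 1 < #(dezaB G b x))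
    (hzNx : z ∉ insert x (G.neighborFinset x))
    (hz : ∀ xi ∈ dezaB G b x, G.neighborFinset xi \ G.neighborFinset x = {z})
    (hw : w ∈ G.neighborFinset x \ dezaB G b z) :
    dezaBc G b w ⊆ G.neighborFinset x \ dezaB G b z := by
  intro u hu
  rcases mem_insert.mp hu with rfl | hu
  · exact hw
  obtain ⟨hzx, hxz⟩ : z ≠ x ∧ ¬G.Adj x z := by simpa using hzNx
  obtain ⟨hxw, hwB⟩ : G.Adj x w ∧ w ∉ dezaB G b z := by simpa using hw
  have hwz : w ≠ z := by
    rintro rfl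
    exact hxz hxw
  have hcwz := hG.commonNbrs_eq_of_notMem_dezaB hwz hwB
  have hab : a < b :=
    lt_of_le_of_ne hG.2.2.2.1 fun h => hwB (mem_dezaB.mpr ⟨hwz, hcwz.trans h⟩)
  have hczx : commonNbrs G z x = a := hG.commonNbrs_eq_of_notMem_dezaB hzx fun hzB =>
    G.notMem_neighborFinset_self z (mem_and_notMem_of_sdiff_eq_singleton (hz z hzB)).1
  have hS := hG.one_lt_card_swapNbrs hβ hz
  have hxu := adj_of_mem_dezaB_of_one_lt_card_swapNbrs hG.isRegularOfDegree hS hxz hxw hwB hu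
  have huB := hG.notMem_dezaB_of_one_lt_card_swapNbrs hS hczx hxz hzx hxw hxu hu
    ((commonNbrs_comm z w).trans hcwz) hab
  simpa using ⟨hxu, huB⟩

end IsDezaGraph

end Deza

theorem stmt12 {V : Type u} [Fintype V] [DecidableEq V] (G : SimpleGraph V)
    [DecidableRel G.Adj] (n k b a : ℕ)
    (hG : IsStrictlyDezaGraph G n k b a) (hk : k = b + 1)
    (hβ : ∀ v : V, 1 < (dezaB G b v).card) :
    (∀ x y : V, IsTypeA G b x → y ∈ G.neighborFinset x →
      (∀ xi ∈ dezaB G b x, G.neighborFinset x \ G.neighborFinset xi = {y}) →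
      ∀ w ∈ G.neighborFinset x \ {y},
        dezaBc G b w ⊆ G.neighborFinset x \ {y}) ∧
    (∀ x z : V, IsTypeA G b x → z ∉ insert x (G.neighborFinset x) →
      (∀ xi ∈ dezaB G b x, G.neighborFinset xi \ G.neighborFinset x = {z}) →
      ∀ w ∈ G.neighborFinset x \ dezaB G b z,
        dezaBc G b w ⊆ G.neighborFinset x \ dezaB G b z) := by
  obtain ⟨hD, -⟩ := hG
  subst hk
  exact ⟨fun x _ _ _ hy _ hw => hD.dezaBc_subset_of_typeA1 (hβ x) hy hw,
    fun x _ _ hz hzB _ hw => hD.dezaBc_subset_of_typeA2 (hβ x) hz hzB hw⟩
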